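/- Let U ⊆ ℝ⁴ be open and let u : U → ℝ be a smooth solution of the equation u₁₃ + u₂₄ + x₁(u₁₁u₂₂ − u₁₂²) = 0 on U. Let λ ∈ ℝ satisfy x₄ ≠ λ for all x ∈ U, and define the vector fields X = ∂₄ + x₁(u₁₁∂₂ − u₁₂∂₁) + (x₁/(x₄−λ))∂₁ and Y = ∂₃ + x₁(u₂₂∂₁ − u₁₂∂₂) − (x₁/(x₄−λ))∂₂. Then for every x ∈ U, the vector [X,Y](x) lies in the linear span of X(x) and Y(x). -/

import Mathlib

/-!
Write `E` for the left-hand side of the equation. A direct computation gives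
`[X, Y] = x₁ (∂E/∂x₂) ∂₁ − x₁ (∂E/∂x₁) ∂₂` for every `C³` function `u`: the `λ`-terms cancel,
and the third derivatives of `u` match because they commute. On a solution `E ≡ 0`, so the
bracket vanishes.
-/

open scoped ContDiff

noncomputable section

/-- `pd i u x` is the partial derivative `∂u/∂xᵢ` at `x`. -/
def pd {n : ℕ} (i : Fin n) (u : (Fin n → ℝ) → ℝ) (x : Fin n → ℝ) : ℝ :=
  fderiv ℝ u x (Pi.single i 1)

/-- `pd2 i j u x` is the second partial derivative `∂²u/∂xᵢ∂xⱼ` at `x`. -/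
def pd2 {n : ℕ} (i j : Fin n) (u : (Fin n → ℝ) → ℝ) (x : Fin n → ℝ) : ℝ :=
  pd i (pd j u) x

/-- Lie bracket of vector fields : `[X,Y](x) = DY(x)(X(x)) − DX(x)(Y(x))`. -/
def lieBr {n : ℕ} (X Y : (Fin n → ℝ) → (Fin n → ℝ)) (x : Fin n → ℝ) : Fin n → ℝ :=
  fderiv ℝ Y x (X x) - fderiv ℝ X x (Y x)

section PartialDerivatives

variable {n : ℕ} {f g : (Fin n → ℝ) → ℝ} {x : Fin n → ℝ}

theorem fderiv_apply_eq_sum_pd (f : (Fin n → ℝ) → ℝ) (x v : Fin n → ℝ) :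
    fderiv ℝ f x v = ∑ i, v i * pd i f x := by
  conv_lhs => rw [pi_eq_sum_univ' v]
  simp [pd]

theorem lieBr_apply {X Y : (Fin n → ℝ) → (Fin n → ℝ)} (hX : DifferentiableAt ℝ X x)
    (hY : DifferentiableAt ℝ Y x) (j : Fin n) :
    lieBr X Y x j =
      ∑ i, (X x i * pd i (fun y => Y y j) x - Y x i * pd i (fun y => X y j) x) := by
  rw [Finset.sum_sub_distrib, ← fderiv_apply_eq_sum_pd, ← fderiv_apply_eq_sum_pd,
    fderiv_apply hX, fderiv_apply hY]
  rfl

theorem Filter.EventuallyEq.pd_eq (h : f =ᶠ[nhds x] g) (i : Fin n) : pd i f x = pd i g x := by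
  rw [pd, pd, h.fderiv_eq]

theorem pd_const (c : ℝ) (i : Fin n) : pd i (fun _ => c) x = 0 := by
  simp [pd]

theorem pd_apply (i k : Fin n) : pd i (fun y => y k) x = Pi.single (M := fun _ => ℝ) i 1 k := by
  simp [pd, (hasFDerivAt_apply k x).fderiv]

theorem pd_neg (i : Fin n) : pd i (fun y => -f y) x = -pd i f x := by
  simp [pd]

theorem pd_add (hf : DifferentiableAt ℝ f x) (hg : DifferentiableAt ℝ g x) (i : Fin n) :
    pd i (fun y => f y + g y) x = pd i f x + pd i g x := by
  simp [pd, fderiv_fun_add hf hg]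

theorem pd_sub (hf : DifferentiableAt ℝ f x) (hg : DifferentiableAt ℝ g x) (i : Fin n) :
    pd i (fun y => f y - g y) x = pd i f x - pd i g x := by
  simp [pd, fderiv_fun_sub hf hg]

theorem pd_mul (hf : DifferentiableAt ℝ f x) (hg : DifferentiableAt ℝ g x) (i : Fin n) :
    pd i (fun y => f y * g y) x = pd i f x * g x + f x * pd i g x := by
  simp only [pd, fderiv_fun_mul hf hg, add_apply, smul_apply, smul_eq_mul]
  ring

theorem pd_div (hf : DifferentiableAt ℝ f x) (hg : DifferentiableAt ℝ g x) (hgx : g x ≠ 0)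
    (i : Fin n) :
    pd i (fun y => f y / g y) x = (pd i f x * g x - f x * pd i g x) / g x ^ 2 := by
  have hinv : HasFDerivAt (fun y => (g y)⁻¹) ((-(g x ^ 2)⁻¹) • fderiv ℝ g x) x :=
    (hasDerivAt_inv hgx).comp_hasFDerivAt x hg.hasFDerivAt
  simp only [div_eq_mul_inv]
  rw [pd, (hf.hasFDerivAt.fun_mul hinv).fderiv]
  simp only [pd, add_apply, smul_apply, smul_eq_mul]
  field_simp
  ring

theorem pd_eq_zero_of_eqOn {U : Set (Fin n → ℝ)} (hU : IsOpen U) (hf : Set.EqOn f 0 U)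
    (hx : x ∈ U) (i : Fin n) : pd i f x = 0 := by
  rw [(hf.eventuallyEq_of_mem (hU.mem_nhds hx)).pd_eq i]
  exact pd_const 0 i

theorem contDiffAt_pd {m N : WithTop ℕ∞} (hf : ContDiffAt ℝ N f x) (hmN : m + 1 ≤ N)
    (i : Fin n) : ContDiffAt ℝ m (pd i f) x :=
  (hf.fderiv_right hmN).clm_apply contDiffAt_const

theorem ContDiffAt.differentiableAt_pd2 (hf : ContDiffAt ℝ 3 f x) (i j : Fin n) :
    DifferentiableAt ℝ (pd2 i j f) x :=
  (contDiffAt_pd (m := 1) (contDiffAt_pd (m := 2) hf le_rfl j) le_rfl i).differentiableAt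
    one_ne_zero

theorem ContDiffAt.pd_comm (hf : ContDiffAt ℝ 2 f x) (i j : Fin n) :
    pd i (pd j f) x = pd j (pd i f) x := by
  have hsymm := hf.isSymmSndFDerivAt (by simp [minSmoothness_of_isRCLikeNormedField])
  have hdf : DifferentiableAt ℝ (fderiv ℝ f) x :=
    (hf.fderiv_right (m := 1) le_rfl).differentiableAt one_ne_zero
  have hsnd : ∀ k l : Fin n,
      pd k (pd l f) x = fderiv ℝ (fderiv ℝ f) x (Pi.single k 1) (Pi.single l 1) := by
    intro k l
    show fderiv ℝ (fun y => fderiv ℝ f y (Pi.single l 1)) x (Pi.single k 1) = _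
    rw [fderiv_clm_apply hdf (differentiableAt_const _)]
    simp
  rw [hsnd, hsnd, hsymm.eq]

theorem ContDiffAt.pd_pd2_comm_left (hf : ContDiffAt ℝ 3 f x) (i j k : Fin n) :
    pd k (pd2 i j f) x = pd i (pd2 k j f) x :=
  (contDiffAt_pd (m := 2) hf le_rfl j).pd_comm k i

theorem ContDiffAt.pd_pd2_comm_right (hf : ContDiffAt ℝ 2 f x) (i j k : Fin n) :
    pd k (pd2 i j f) x = pd k (pd2 j i f) x := by
  refine Filter.EventuallyEq.pd_eq ?_ k
  filter_upwards [hf.eventually (by simp)] with y hy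
  exact hy.pd_comm i j

end PartialDerivatives

/-- `i : Fin 4` indexes the coordinate `xᵢ₊₁`, so this is `u₁₃ + u₂₄ + x₁(u₁₁u₂₂ − u₁₂²)`. -/
def heavenly (u : (Fin 4 → ℝ) → ℝ) (x : Fin 4 → ℝ) : ℝ :=
  pd2 0 2 u x + pd2 1 3 u x + x 0 * (pd2 0 0 u x * pd2 1 1 u x - (pd2 0 1 u x) ^ 2)

def laxX (u : (Fin 4 → ℝ) → ℝ) (lam : ℝ) (x : Fin 4 → ℝ) : Fin 4 → ℝ :=
  ![x 0 / (x 3 - lam) - x 0 * pd2 0 1 u x, x 0 * pd2 0 0 u x, 0, 1]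

def laxY (u : (Fin 4 → ℝ) → ℝ) (lam : ℝ) (x : Fin 4 → ℝ) : Fin 4 → ℝ :=
  ![x 0 * pd2 1 1 u x, -(x 0 * pd2 0 1 u x) - x 0 / (x 3 - lam), 1, 0]

theorem pd_heavenly {u : (Fin 4 → ℝ) → ℝ} {x : Fin 4 → ℝ} (hu : ContDiffAt ℝ 3 u x)
    (k : Fin 4) :
    pd k (heavenly u) x = pd k (pd2 0 2 u) x + pd k (pd2 1 3 u) x
      + Pi.single (M := fun _ => ℝ) k 1 0 * (pd2 0 0 u x * pd2 1 1 u x - pd2 0 1 u x ^ 2)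
      + x 0 * (pd k (pd2 0 0 u) x * pd2 1 1 u x + pd2 0 0 u x * pd k (pd2 1 1 u) x
        - 2 * pd2 0 1 u x * pd k (pd2 0 1 u) x) := by
  have hd := hu.differentiableAt_pd2
  unfold heavenly
  simp (disch := fun_prop) only [pd_add, pd_mul, pd_sub, pow_two, pd_apply]
  ring

section LaxPair

variable {u : (Fin 4 → ℝ) → ℝ} {lam : ℝ} {x : Fin 4 → ℝ}

theorem laxX_eq : laxX u lam = fun x => (Pi.single 3 1 : Fin 4 → ℝ)
    + (x 0 * pd2 0 0 u x) • (Pi.single 1 1 : Fin 4 → ℝ)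
    - (x 0 * pd2 0 1 u x) • (Pi.single 0 1 : Fin 4 → ℝ)
    + (x 0 / (x 3 - lam)) • (Pi.single 0 1 : Fin 4 → ℝ) := by
  funext y j
  fin_cases j <;> simp [laxX, neg_add_eq_sub]

theorem laxY_eq : laxY u lam = fun x => (Pi.single 2 1 : Fin 4 → ℝ)
    + (x 0 * pd2 1 1 u x) • (Pi.single 0 1 : Fin 4 → ℝ)
    - (x 0 * pd2 0 1 u x) • (Pi.single 1 1 : Fin 4 → ℝ)
    - (x 0 / (x 3 - lam)) • (Pi.single 1 1 : Fin 4 → ℝ) := by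
  funext y j
  fin_cases j <;> simp [laxY]

theorem differentiableAt_laxX (hu : ContDiffAt ℝ 3 u x) (hlam : x 3 ≠ lam) :
    DifferentiableAt ℝ (laxX u lam) x := by
  have hd := hu.differentiableAt_pd2
  have hw : x 3 - lam ≠ 0 := sub_ne_zero.2 hlam
  refine differentiableAt_pi.2 fun j => ?_
  fin_cases j <;> simp only [laxX, Fin.zero_eta, Fin.mk_one, Fin.reduceFinMk, Matrix.cons_val] <;>
    fun_prop (disch := exact hw)

theorem differentiableAt_laxY (hu : ContDiffAt ℝ 3 u x) (hlam : x 3 ≠ lam) :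
    DifferentiableAt ℝ (laxY u lam) x := by
  have hd := hu.differentiableAt_pd2
  have hw : x 3 - lam ≠ 0 := sub_ne_zero.2 hlam
  refine differentiableAt_pi.2 fun j => ?_
  fin_cases j <;> simp only [laxY, Fin.zero_eta, Fin.mk_one, Fin.reduceFinMk, Matrix.cons_val] <;>
    fun_prop (disch := exact hw)

theorem lieBr_laxX_laxY (hu : ContDiffAt ℝ 3 u x) (hlam : x 3 ≠ lam) :
    lieBr (laxX u lam) (laxY u lam) x =
      ![x 0 * pd 1 (heavenly u) x, -(x 0 * pd 0 (heavenly u) x), 0, 0] := by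
  have hw : x 3 - lam ≠ 0 := sub_ne_zero.2 hlam
  have hu2 : ContDiffAt ℝ 2 u x := hu.of_le (by decide)
  have hd := hu.differentiableAt_pd2
  have u012 : pd 1 (pd2 0 2 u) x = pd 2 (pd2 0 1 u) x := by
    rw [hu.pd_pd2_comm_left 0 2 1, hu2.pd_pd2_comm_right 1 2 0, hu.pd_pd2_comm_left 2 1 0]
  have u113 : pd 1 (pd2 1 3 u) x = pd 3 (pd2 1 1 u) x := by
    rw [hu2.pd_pd2_comm_right 1 3 1, hu.pd_pd2_comm_left 3 1 1]
  have u001 : pd 1 (pd2 0 0 u) x = pd 0 (pd2 0 1 u) x := by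
    rw [hu.pd_pd2_comm_left 0 0 1, hu2.pd_pd2_comm_right 1 0 0]
  have u011 : pd 0 (pd2 1 1 u) x = pd 1 (pd2 0 1 u) x := hu.pd_pd2_comm_left 1 1 0
  have u002 : pd 0 (pd2 0 2 u) x = pd 2 (pd2 0 0 u) x := by
    rw [hu2.pd_pd2_comm_right 0 2 0, hu.pd_pd2_comm_left 2 0 0]
  have u013 : pd 0 (pd2 1 3 u) x = pd 3 (pd2 0 1 u) x := by
    rw [hu2.pd_pd2_comm_right 1 3 0, hu.pd_pd2_comm_left 3 1 0]
  ext j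
  rw [lieBr_apply (differentiableAt_laxX hu hlam) (differentiableAt_laxY hu hlam),
    Fin.sum_univ_four]
  fin_cases j
  all_goals simp (disch := first | fun_prop (disch := exact hw) | exact hw) only [laxX, laxY,
    Fin.zero_eta, Fin.mk_one, Fin.reduceFinMk, Matrix.cons_val, pd_heavenly hu, pd_sub, pd_neg,
    pd_mul, pd_div, pd_apply, pd_const, Pi.single_apply, Fin.reduceEq, ↓reduceIte]
  · rw [u012, u113, u001, u011]
    field_simp
    ring
  · rw [u002, u013, u001, u011]
    field_simp
    ring
  · ring
  · ring

end LaxPair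

/-- Lax pair (Frobenius integrability) for the deformed second heavenly
equation with `f = x₁`. -/
theorem statement10 (U : Set (Fin 4 → ℝ)) (hU : IsOpen U)
    (u : (Fin 4 → ℝ) → ℝ) (hu : ContDiffOn ℝ ∞ u U)
    (hsol : ∀ x ∈ U,
      pd2 0 2 u x + pd2 1 3 u x
        + x 0 * (pd2 0 0 u x * pd2 1 1 u x - (pd2 0 1 u x) ^ 2) = 0)
    (lam : ℝ) (hlam : ∀ x ∈ U, x 3 ≠ lam)
    (X Y : (Fin 4 → ℝ) → (Fin 4 → ℝ))
    (hX : X = fun x => (Pi.single 3 1 : Fin 4 → ℝ)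
        + (x 0 * pd2 0 0 u x) • (Pi.single 1 1 : Fin 4 → ℝ)
        - (x 0 * pd2 0 1 u x) • (Pi.single 0 1 : Fin 4 → ℝ)
        + (x 0 / (x 3 - lam)) • (Pi.single 0 1 : Fin 4 → ℝ))
    (hY : Y = fun x => (Pi.single 2 1 : Fin 4 → ℝ)
        + (x 0 * pd2 1 1 u x) • (Pi.single 0 1 : Fin 4 → ℝ)
        - (x 0 * pd2 0 1 u x) • (Pi.single 1 1 : Fin 4 → ℝ)
        - (x 0 / (x 3 - lam)) • (Pi.single 1 1 : Fin 4 → ℝ)) :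
    ∀ x ∈ U, lieBr X Y x ∈ Submodule.span ℝ {X x, Y x} := by
  intro x hx
  obtain rfl : X = laxX u lam := hX.trans laxX_eq.symm
  obtain rfl : Y = laxY u lam := hY.trans laxY_eq.symm
  have hu3 : ContDiffAt ℝ 3 u x := (hu.contDiffAt (hU.mem_nhds hx)).of_le (by decide)
  have hE : Set.EqOn (heavenly u) 0 U := hsol
  have hbracket : lieBr (laxX u lam) (laxY u lam) x = 0 := by
    rw [lieBr_laxX_laxY hu3 (hlam x hx), pd_eq_zero_of_eqOn hU hE hx,
      pd_eq_zero_of_eqOn hU hE hx]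
    simp
  rw [hbracket]
  exact Submodule.zero_mem _
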